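/- (Theorem 4.4, part (iii)) Consider a lattice spin model with finite spin space S endowed with the discrete topology and the counting measure, whose interaction potential Φ is translation invariant, absolutely summable, non-constant and positively correlated, and assume the pressure ψ is differentiable on (0,∞). Let a < b be as in Theorem 4.4(i)-(ii), so that σ = s on (a,b) and σ' : (a,b) → (0,∞) and ψ' : (0,∞) → (a,b) are mutually inverse. Then for every β > 0 with u := ψ'(β): the system undergoes a second-order phase transition at β (i.e. ψ is differentiable but not twice differentiable at β) if and only if σ is not twice differentiable at u or σ''(u) = 0. Moreover, if ψ is twice differentiable at β and σ is twice differentiable at u, then ψ''(β) σ''(u) = 1. -/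

import Mathlib

open Filter Topology

/-- The lattice `ℤ^d`. -/
abbrev Zd (d : ℕ) := Fin d → ℤ

/-- The configuration space `Ω_Λ = S^Λ` for a finite `Λ ⊆ ℤ^d`. -/
abbrev Config (S : Type) {d : ℕ} (Λ : Finset (Zd d)) : Type := {x // x ∈ Λ} → S

/-- Restriction of a configuration on `Λ` to a subset `A ⊆ Λ`. -/
def restrictCfg {S : Type} {d : ℕ} {Λ A : Finset (Zd d)} (h : A ⊆ Λ) (ω : Config S Λ) :
    Config S A := fun a => ω ⟨a.1, h a.2⟩

/-- An interaction potential: a function `Φ_A : Ω_A → ℝ` for each finite `A ⊆ ℤ^d`. -/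
abbrev Pot (d : ℕ) (S : Type) := (A : Finset (Zd d)) → Config S A → ℝ

/-- The sup norm `‖Φ_A‖_∞`. -/
noncomputable def potNorm {d : ℕ} {S : Type} [Fintype S] [Nonempty S] (Φ : Pot d S)
    (A : Finset (Zd d)) : ℝ := ⨆ ω : Config S A, |Φ A ω|

/-- Translate of a finite set: `A + x`. -/
def shiftSet {d : ℕ} (x : Zd d) (A : Finset (Zd d)) : Finset (Zd d) := A.image (· + x)

/-- Translation invariance of a potential. -/
def TransInv {d : ℕ} {S : Type} (Φ : Pot d S) : Prop :=
  ∀ (x : Zd d) (A : Finset (Zd d)) (ω : Config S (shiftSet x A)),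
    Φ (shiftSet x A) ω = Φ A (fun a => ω ⟨a.1 + x, Finset.mem_image_of_mem _ a.2⟩)

/-- Absolute summability: `Σ_{A ∋ 0} ‖Φ_A‖ < ∞`. -/
def AbsSummable {d : ℕ} {S : Type} [Fintype S] [Nonempty S] (Φ : Pot d S) : Prop :=
  Summable (fun A : {A : Finset (Zd d) // (0 : Zd d) ∈ A} => potNorm Φ A.1)

/-- `‖Φ‖ = Σ_{A ∋ 0} ‖Φ_A‖`. -/
noncomputable def potFullNorm {d : ℕ} {S : Type} [Fintype S] [Nonempty S] (Φ : Pot d S) : ℝ :=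
  ∑' A : {A : Finset (Zd d) // (0 : Zd d) ∈ A}, potNorm Φ A.1

/-- The Hamiltonian `H_Λ(ω) = Σ_{A ⊆ Λ} Φ_A(ω_A)`. -/
noncomputable def Ham {d : ℕ} {S : Type} (Φ : Pot d S) (Λ : Finset (Zd d))
    (ω : Config S Λ) : ℝ :=
  ∑ A ∈ Λ.powerset.attach, Φ A.1 (restrictCfg (Finset.mem_powerset.mp A.2) ω)

/-- The hypercube `Λ_n = [-n, n]^d ∩ ℤ^d`. -/
noncomputable def cube (d n : ℕ) : Finset (Zd d) := Fintype.piFinset fun _ => Finset.Icc (-(n : ℤ)) n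

/-- Energy per site `h_n(ω) = H_n(ω)/|Λ_n|`. -/
noncomputable def enDensity {d : ℕ} {S : Type} (Φ : Pot d S) (n : ℕ)
    (ω : Config S (cube d n)) : ℝ := Ham Φ (cube d n) ω / (cube d n).card

/-- `𝕄_n(B) = #{ω ∈ Ω_n : h_n(ω) ∈ B}`. -/
noncomputable def Mcount {d : ℕ} {S : Type} [Fintype S] (Φ : Pot d S) (n : ℕ)
    (B : Set ℝ) : ℕ := Nat.card {ω : Config S (cube d n) // enDensity Φ n ω ∈ B}

/-- The sequence `(1/|Λ_n|) log 𝕄_n(B)`, with the convention `log 0 = -∞`. -/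
noncomputable def mSeq {d : ℕ} {S : Type} [Fintype S] (Φ : Pot d S) (B : Set ℝ)
    (n : ℕ) : EReal :=
  if Mcount Φ n B = 0 then ⊥
  else ((Real.log (Mcount Φ n B) / (cube d n).card : ℝ) : EReal)

/-- `m(B) = lim_n (1/|Λ_n|) log 𝕄_n(B)` (defined via `limsup`; the content that this is
an actual limit is asserted in the theorems). -/
noncomputable def mFun {d : ℕ} {S : Type} [Fintype S] (Φ : Pot d S) (B : Set ℝ) : EReal :=
  Filter.limsup (mSeq Φ B) Filter.atTop

/-- The microcanonical entropy `s(u) = lim_{r→0⁺} m((u-r, u+r))` (defined via `limsup`). -/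
noncomputable def entropy {d : ℕ} {S : Type} [Fintype S] (Φ : Pot d S) (u : ℝ) : EReal :=
  Filter.limsup (fun r : ℝ => mFun Φ (Set.Ioo (u - r) (u + r))) (nhdsWithin 0 (Set.Ioi 0))

/-- The partition function `Z_{Λ,β}`. -/
noncomputable def Zfun {d : ℕ} {S : Type} [Fintype S] (Φ : Pot d S) (Λ : Finset (Zd d))
    (β : ℝ) : ℝ := ∑ ω : Config S Λ, Real.exp (-β * Ham Φ Λ ω)

/-- The finite-volume pressure `ψ_Λ(β) = -(1/|Λ|) log Z_{Λ,β}`. -/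
noncomputable def pressureFin {d : ℕ} {S : Type} [Fintype S] (Φ : Pot d S)
    (Λ : Finset (Zd d)) (β : ℝ) : ℝ := -Real.log (Zfun Φ Λ β) / Λ.card

/-- The pressure sequence `-(1/|Λ_n|) log Z_{Λ_n,β}`. -/
noncomputable def pressureSeq {d : ℕ} {S : Type} [Fintype S] (Φ : Pot d S) (β : ℝ)
    (n : ℕ) : ℝ := pressureFin Φ (cube d n) β

/-- Gibbs expectation `⟨f⟩_{Λ,β}`. -/
noncomputable def gibbsExp {d : ℕ} {S : Type} [Fintype S] (Φ : Pot d S)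
    (Λ : Finset (Zd d)) (β : ℝ) (f : Config S Λ → ℝ) : ℝ :=
  (∑ ω : Config S Λ, f ω * Real.exp (-β * Ham Φ Λ ω)) / Zfun Φ Λ β

/-- Gibbs variance `Var_{Λ,β}(f)`. -/
noncomputable def gibbsVar {d : ℕ} {S : Type} [Fintype S] (Φ : Pot d S)
    (Λ : Finset (Zd d)) (β : ℝ) (f : Config S Λ → ℝ) : ℝ :=
  gibbsExp Φ Λ β (fun ω => (f ω) ^ 2) - (gibbsExp Φ Λ β f) ^ 2

/-- Gibbs covariance `Cov_{Λ,β}(f,g)`. -/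
noncomputable def gibbsCov {d : ℕ} {S : Type} [Fintype S] (Φ : Pot d S)
    (Λ : Finset (Zd d)) (β : ℝ) (f g : Config S Λ → ℝ) : ℝ :=
  gibbsExp Φ Λ β (fun ω => f ω * g ω) - gibbsExp Φ Λ β f * gibbsExp Φ Λ β g

/-- Gibbs probability `μ_{Λ,β}(E)`. -/
noncomputable def gibbsProb {d : ℕ} {S : Type} [Fintype S] (Φ : Pot d S)
    (Λ : Finset (Zd d)) (β : ℝ) (E : Set (Config S Λ)) : ℝ :=
  (∑ ω : Config S Λ, E.indicator (fun ω => Real.exp (-β * Ham Φ Λ ω)) ω) / Zfun Φ Λ β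

/-- Positive correlation of the potential. -/
def PosCorr {d : ℕ} {S : Type} [Fintype S] (Φ : Pot d S) : Prop :=
  ∀ (Λ A B : Finset (Zd d)) (hA : A ⊆ Λ) (hB : B ⊆ Λ) (β : ℝ), 0 < β →
    0 ≤ gibbsCov Φ Λ β (fun ω => Φ A (restrictCfg hA ω)) (fun ω => Φ B (restrictCfg hB ω))

/-- `#M_n(u) = #{ω ∈ Ω_n : H_n(ω) ≤ |Λ_n| u}`. -/
noncomputable def MvolCount {d : ℕ} {S : Type} [Fintype S] (Φ : Pot d S) (n : ℕ)
    (u : ℝ) : ℕ :=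
  Nat.card {ω : Config S (cube d n) // Ham Φ (cube d n) ω ≤ (cube d n).card * u}

/-- The sequence `(1/|Λ_n|) log #M_n(u)`, with the convention `log 0 = -∞`. -/
noncomputable def sigmaSeq {d : ℕ} {S : Type} [Fintype S] (Φ : Pot d S) (u : ℝ)
    (n : ℕ) : EReal :=
  if MvolCount Φ n u = 0 then ⊥
  else ((Real.log (MvolCount Φ n u) / (cube d n).card : ℝ) : EReal)

/-- `σ(u) = lim_n (1/|Λ_n|) log #M_n(u)` (defined via `limsup`). -/
noncomputable def sigmaFun {d : ℕ} {S : Type} [Fintype S] (Φ : Pot d S) (u : ℝ) : EReal :=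
  Filter.limsup (sigmaSeq Φ u) Filter.atTop

/-!
The finite-volume pressure `ψ_Λ = -|Λ|⁻¹ log Z_Λ` satisfies `ψ_Λ'' = -Var(H_Λ)/|Λ|`. Positive
correlation bounds `Var(H_Λ)` below by the sum of the variances of the interaction terms, and by
translation invariance and a finite-energy estimate each of the `≍ |Λ|` translates of a
non-constant term has variance bounded below, uniformly for `β` in a bounded interval. Hence
`ψ + cβ²/2` is concave on `(0, y)` for some `c > 0`: `ψ'` is strictly decreasing and
`ψ'' ≤ -c < 0` wherever it exists. As mutually inverse strictly decreasing bijections between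
open intervals, `ψ'` and `σ'` are continuous, and the inverse function theorem transfers
differentiability with nonzero derivative between them, with `ψ''(β) σ''(u) = 1`.
-/

open Finset

lemma ConcaveOn.of_tendsto {ι E : Type*} [AddCommMonoid E] [Module ℝ E] {l : Filter ι}
    [l.NeBot] {s : Set E} {F : ι → E → ℝ} {f : E → ℝ} (hF : ∀ᶠ i in l, ConcaveOn ℝ s (F i))
    (hf : ∀ x ∈ s, Tendsto (fun i => F i x) l (𝓝 (f x))) : ConcaveOn ℝ s f := by
  obtain ⟨i, hi⟩ := hF.exists
  refine ⟨hi.1, fun x hx y hy a b ha hb hab => ?_⟩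
  refine le_of_tendsto_of_tendsto (((hf x hx).const_smul a).add ((hf y hy).const_smul b))
    (hf _ (hi.1 hx hy ha hb hab)) ?_
  filter_upwards [hF] with i hi
  exact hi.2 hx hy ha hb hab

lemma hasDerivAt_half_mul_sq (c t : ℝ) : HasDerivAt (fun s => c / 2 * s ^ 2) (c * t) t :=
  ((hasDerivAt_pow 2 t).const_mul (c / 2)).congr_deriv (by ring)

lemma deriv_le_neg_of_antitoneOn_add_mul {g : ℝ → ℝ} {s : Set ℝ} {c x : ℝ}
    (h : AntitoneOn (fun t => g t + c * t) s) (hs : s ∈ 𝓝 x) (hg : DifferentiableAt ℝ g x) :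
    deriv g x ≤ -c := by
  have hd : HasDerivAt (fun t => g t + c * t) (deriv g x + c) x :=
    hg.hasDerivAt.add (((hasDerivAt_id' x).const_mul c).congr_deriv (mul_one c))
  have := h.derivWithin_nonpos (x := x)
  rw [derivWithin_of_mem_nhds hs, hd.deriv] at this
  linarith

section StrongAntitone

variable {g : ℝ → ℝ}

lemma strictAntiOn_Ioi_of_forall_antitoneOn_add_mul
    (h : ∀ y : ℝ, ∃ c > 0, AntitoneOn (fun t => g t + c * t) (Set.Ioo 0 y)) :
    StrictAntiOn g (Set.Ioi 0) := fun a ha b hb hab => by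
  obtain ⟨c, hc, hanti⟩ := h (b + 1)
  have := hanti ⟨ha, by linarith⟩ ⟨hb, by linarith⟩ hab.le
  nlinarith

lemma deriv_neg_of_forall_antitoneOn_add_mul
    (h : ∀ y : ℝ, ∃ c > 0, AntitoneOn (fun t => g t + c * t) (Set.Ioo 0 y)) {x : ℝ}
    (hx : 0 < x) (hg : DifferentiableAt ℝ g x) : deriv g x < 0 := by
  obtain ⟨c, hc, hanti⟩ := h (x + 1)
  linarith [deriv_le_neg_of_antitoneOn_add_mul hanti (Ioo_mem_nhds hx (lt_add_one x)) hg]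

end StrongAntitone

section InversePair

open Set

lemma StrictAntiOn.continuousAt_of_image_mem_nhds {α β : Type*} [LinearOrder α]
    [TopologicalSpace α] [OrderTopology α] [LinearOrder β] [TopologicalSpace β] [OrderTopology β]
    [DenselyOrdered β] {f : α → β} {s : Set α} {x : α} (hf : StrictAntiOn f s) (hs : s ∈ 𝓝 x)
    (hfs : f '' s ∈ 𝓝 (f x)) : ContinuousAt f x :=
  hf.dual_right.continuousAt_of_image_mem_nhds hs hfs

variable {f g : ℝ → ℝ} {s t : Set ℝ}

lemma StrictAntiOn.of_rightInvOn (hf : StrictAntiOn f s) (hg : MapsTo g t s)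
    (hfg : RightInvOn g f t) : StrictAntiOn g t := fun a ha b hb hab => by
  rwa [← hf.lt_iff_gt (hg ha) (hg hb), hfg hb, hfg ha]

lemma StrictAntiOn.continuousAt_of_rightInvOn (hf : StrictAntiOn f s) (hs : IsOpen s)
    (ht : IsOpen t) (hfst : MapsTo f s t) (hg : MapsTo g t s) (hfg : RightInvOn g f t) {x : ℝ}
    (hx : x ∈ s) : ContinuousAt f x :=
  hf.continuousAt_of_image_mem_nhds (hs.mem_nhds hx) <|
    Filter.mem_of_superset (ht.mem_nhds (hfst hx)) fun y hy => ⟨g y, hg hy, hfg hy⟩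

theorem StrictAntiOn.not_differentiableAt_iff_of_invOn (hf : StrictAntiOn f s) (hs : IsOpen s)
    (ht : IsOpen t) (hfst : MapsTo f s t) (hg : MapsTo g t s) (hinv : InvOn g f s t) {x : ℝ}
    (hx : x ∈ s) (hf' : DifferentiableAt ℝ f x → deriv f x ≠ 0) :
    ((¬ DifferentiableAt ℝ f x) ↔ (¬ DifferentiableAt ℝ g (f x) ∨ deriv g (f x) = 0)) ∧
      (DifferentiableAt ℝ f x → DifferentiableAt ℝ g (f x) → deriv f x * deriv g (f x) = 1) := by
  have hgf : ∀ᶠ y in 𝓝 x, g (f y) = y := Filter.eventually_of_mem (hs.mem_nhds hx) hinv.1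
  have hfg : ∀ᶠ y in 𝓝 (f x), f (g y) = y :=
    Filter.eventually_of_mem (ht.mem_nhds (hfst hx)) hinv.2
  have hg_of_hf : DifferentiableAt ℝ f x → HasDerivAt g (deriv f x)⁻¹ (f x) := fun hd =>
    HasDerivAt.of_local_left_inverse
      ((hf.of_rightInvOn hg hinv.2).continuousAt_of_rightInvOn ht hs hg hfst hinv.1 (hfst hx))
      (by rw [hinv.1 hx]; exact hd.hasDerivAt) (hf' hd) hfg
  have hf_of_hg : DifferentiableAt ℝ g (f x) → deriv g (f x) ≠ 0 → DifferentiableAt ℝ f x :=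
    fun hd hne => (HasDerivAt.of_local_left_inverse
      (hf.continuousAt_of_rightInvOn hs ht hfst hg hinv.2 hx) hd.hasDerivAt hne hgf
      ).differentiableAt
  refine ⟨⟨fun hnd => ?_, fun hrhs hd => ?_⟩, fun hd _ => ?_⟩
  · by_contra! h
    exact hnd (hf_of_hg h.1 h.2)
  · have := hg_of_hf hd
    rcases hrhs with hnd | hzero
    · exact hnd this.differentiableAt
    · exact inv_ne_zero (hf' hd) (this.deriv ▸ hzero)
  · rw [(hg_of_hf hd).deriv, mul_inv_cancel₀ (hf' hd)]

end InversePair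

section Configurations

variable {d : ℕ} {S : Type}

def shiftEquiv (x : Zd d) (A : Finset (Zd d)) : Config S A ≃ Config S (shiftSet x A) where
  toFun σ b := σ ⟨b.1 - x, by
    obtain ⟨a, ha, hax⟩ := Finset.mem_image.mp b.2
    simpa [← hax] using ha⟩
  invFun ω a := ω ⟨a.1 + x, Finset.mem_image_of_mem _ a.2⟩
  left_inv σ := funext fun a => congrArg σ (Subtype.ext (add_sub_cancel_right a.1 x))
  right_inv ω := funext fun b => congrArg ω (Subtype.ext (sub_add_cancel b.1 x))

lemma TransInv.apply_shiftEquiv {Φ : Pot d S} (hTI : TransInv Φ) (x : Zd d)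
    (A : Finset (Zd d)) (σ : Config S A) : Φ (shiftSet x A) (shiftEquiv x A σ) = Φ A σ := by
  rw [hTI x A]
  exact congrArg (Φ A) ((shiftEquiv x A).left_inv σ)

noncomputable def localTerm (Φ : Pot d S) (Λ B : Finset (Zd d)) (ω : Config S Λ) : ℝ :=
  if h : B ⊆ Λ then Φ B (restrictCfg h ω) else 0

lemma localTerm_of_subset {Φ : Pot d S} {Λ B : Finset (Zd d)} (h : B ⊆ Λ) :
    localTerm Φ Λ B = fun ω => Φ B (restrictCfg h ω) :=
  funext fun _ => dif_pos h

lemma Ham_eq_sum_localTerm (Φ : Pot d S) (Λ : Finset (Zd d)) :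
    Ham Φ Λ = fun ω => ∑ B ∈ Λ.powerset, localTerm Φ Λ B ω := by
  funext ω
  rw [Ham, ← Finset.sum_attach Λ.powerset]
  exact sum_congr rfl fun B _ => by rw [localTerm_of_subset (mem_powerset.mp B.2)]

def replaceCfg {Λ A : Finset (Zd d)} (τ : Config S A) (ω : Config S Λ) : Config S Λ :=
  fun i => if h : i.1 ∈ A then τ ⟨i.1, h⟩ else ω i

lemma restrictCfg_replaceCfg {Λ A : Finset (Zd d)} (hA : A ⊆ Λ) (τ : Config S A)
    (ω : Config S Λ) : restrictCfg hA (replaceCfg τ ω) = τ :=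
  funext fun a => by simp [restrictCfg, replaceCfg, a.2]

lemma replaceCfg_of_restrictCfg_eq {Λ A : Finset (Zd d)} (hA : A ⊆ Λ) (τ : Config S A)
    {ω : Config S Λ} {τ' : Config S A} (h : restrictCfg hA ω = τ') :
    replaceCfg τ' (replaceCfg τ ω) = ω := by
  subst h
  funext i
  by_cases hi : i.1 ∈ A <;> simp [replaceCfg, restrictCfg, hi]

end Configurations

section Potential

variable {d : ℕ} {S : Type} [Fintype S] [Nonempty S] {Φ : Pot d S}

lemma potNorm_nonneg (Φ : Pot d S) (A : Finset (Zd d)) : 0 ≤ potNorm Φ A :=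
  Real.iSup_nonneg fun _ => abs_nonneg _

lemma abs_le_potNorm (Φ : Pot d S) (A : Finset (Zd d)) (ω : Config S A) :
    |Φ A ω| ≤ potNorm Φ A :=
  le_ciSup (f := fun ω => |Φ A ω|) (Set.finite_range _).bddAbove ω

lemma potFullNorm_nonneg (Φ : Pot d S) : 0 ≤ potFullNorm Φ :=
  tsum_nonneg fun _ => potNorm_nonneg Φ _

lemma TransInv.potNorm_shiftSet (hTI : TransInv Φ) (x : Zd d) (A : Finset (Zd d)) :
    potNorm Φ (shiftSet x A) = potNorm Φ A :=
  ((shiftEquiv x A).iSup_congr fun σ => by rw [hTI.apply_shiftEquiv]).symm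

lemma sum_potNorm_le_potFullNorm (hTI : TransInv Φ) (hAS : AbsSummable Φ) {p : Zd d}
    {s : Finset (Finset (Zd d))} (hs : ∀ B ∈ s, p ∈ B) :
    ∑ B ∈ s, potNorm Φ B ≤ potFullNorm Φ := by
  let e : {B // B ∈ s} → {A : Finset (Zd d) // (0 : Zd d) ∈ A} := fun B =>
    ⟨shiftSet (-p) B.1, Finset.mem_image.mpr ⟨p, hs B.1 B.2, add_neg_cancel p⟩⟩
  have he : Function.Injective e := fun B C h =>
    Subtype.ext (Finset.image_injective (add_left_injective (-p)) (congrArg Subtype.val h))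
  calc ∑ B ∈ s, potNorm Φ B = ∑ A ∈ s.attach.map ⟨e, he⟩, potNorm Φ A.1 := by
        rw [Finset.sum_map, ← Finset.sum_attach s]
        exact sum_congr rfl fun B _ => (hTI.potNorm_shiftSet _ _).symm
    _ ≤ potFullNorm Φ := hAS.sum_le_tsum _ fun _ _ => potNorm_nonneg Φ _

lemma abs_localTerm_sub_le {Λ A B : Finset (Zd d)} (ω ω' : Config S Λ)
    (hagree : ∀ i : {x // x ∈ Λ}, i.1 ∉ A → ω i = ω' i) :
    |localTerm Φ Λ B ω - localTerm Φ Λ B ω'| ≤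
      ∑ p ∈ A, if p ∈ B then 2 * potNorm Φ B else 0 := by
  have hnonneg : ∀ p ∈ A, 0 ≤ if p ∈ B then 2 * potNorm Φ B else 0 := fun p _ => by
    split_ifs <;> linarith [potNorm_nonneg Φ B]
  by_cases hB : B ⊆ Λ
  · simp only [localTerm_of_subset hB]
    by_cases hBA : ∃ p ∈ A, p ∈ B
    · obtain ⟨p, hpA, hpB⟩ := hBA
      calc _ ≤ |Φ B (restrictCfg hB ω)| + |Φ B (restrictCfg hB ω')| := abs_sub _ _
        _ ≤ 2 * potNorm Φ B := by
          linarith [abs_le_potNorm Φ B (restrictCfg hB ω), abs_le_potNorm Φ B (restrictCfg hB ω')]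
        _ ≤ _ := by simpa [hpB] using single_le_sum hnonneg hpA
    · push Not at hBA
      have : restrictCfg hB ω = restrictCfg hB ω' :=
        funext fun i => hagree ⟨i.1, hB i.2⟩ fun hi => hBA _ hi i.2
      rw [this, sub_self, abs_zero]
      exact sum_nonneg hnonneg
  · simpa [localTerm, hB] using sum_nonneg hnonneg

lemma abs_Ham_sub_le (hTI : TransInv Φ) (hAS : AbsSummable Φ) {Λ A : Finset (Zd d)}
    (ω ω' : Config S Λ) (hagree : ∀ i : {x // x ∈ Λ}, i.1 ∉ A → ω i = ω' i) :
    |Ham Φ Λ ω - Ham Φ Λ ω'| ≤ 2 * A.card * potFullNorm Φ := by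
  rw [Ham_eq_sum_localTerm, ← sum_sub_distrib]
  calc _ ≤ ∑ B ∈ Λ.powerset, |localTerm Φ Λ B ω - localTerm Φ Λ B ω'| := abs_sum_le_sum_abs _ _
    _ ≤ ∑ B ∈ Λ.powerset, ∑ p ∈ A, if p ∈ B then 2 * potNorm Φ B else 0 :=
      sum_le_sum fun B _ => abs_localTerm_sub_le ω ω' hagree
    _ = ∑ p ∈ A, 2 * ∑ B ∈ Λ.powerset with p ∈ B, potNorm Φ B := by
      rw [sum_comm]
      simp only [sum_ite, sum_const_zero, add_zero, mul_sum]
    _ ≤ ∑ _p ∈ A, 2 * potFullNorm Φ := sum_le_sum fun p _ => by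
      gcongr
      exact sum_potNorm_le_potFullNorm hTI hAS fun B hB => (mem_filter.mp hB).2
    _ = 2 * A.card * potFullNorm Φ := by rw [sum_const, nsmul_eq_mul]; ring

end Potential

section Gibbs

variable {d : ℕ} {S : Type} [Fintype S] {Φ : Pot d S} {Λ : Finset (Zd d)} {β : ℝ}

lemma Zfun_pos [Nonempty S] (Φ : Pot d S) (Λ : Finset (Zd d)) (β : ℝ) : 0 < Zfun Φ Λ β :=
  sum_pos (fun _ _ => Real.exp_pos _) univ_nonempty

lemma gibbsExp_sum {ι : Type} (s : Finset ι) (f : ι → Config S Λ → ℝ) :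
    gibbsExp Φ Λ β (fun ω => ∑ i ∈ s, f i ω) = ∑ i ∈ s, gibbsExp Φ Λ β (f i) := by
  simp only [gibbsExp, ← sum_div, sum_mul]
  rw [sum_comm]

lemma gibbsCov_sum_sum {ι κ : Type} (s : Finset ι) (t : Finset κ) (f : ι → Config S Λ → ℝ)
    (g : κ → Config S Λ → ℝ) :
    gibbsCov Φ Λ β (fun ω => ∑ i ∈ s, f i ω) (fun ω => ∑ j ∈ t, g j ω) =
      ∑ i ∈ s, ∑ j ∈ t, gibbsCov Φ Λ β (f i) (g j) := by
  simp only [gibbsCov, sum_mul_sum, gibbsExp_sum, ← sum_sub_distrib]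

lemma gibbsVar_eq_gibbsCov (f : Config S Λ → ℝ) : gibbsVar Φ Λ β f = gibbsCov Φ Λ β f f := by
  simp only [gibbsVar, gibbsCov, sq]

lemma gibbsVar_eq_sum_sq_sub [Nonempty S] (f : Config S Λ → ℝ) :
    gibbsVar Φ Λ β f = (∑ ω, (f ω - gibbsExp Φ Λ β f) ^ 2 * Real.exp (-β * Ham Φ Λ ω)) /
      Zfun Φ Λ β := by
  have hZ := (Zfun_pos Φ Λ β).ne'
  set m := gibbsExp Φ Λ β f with hm
  have hmZ : ∑ ω, f ω * Real.exp (-β * Ham Φ Λ ω) = m * Zfun Φ Λ β := by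
    rw [hm, gibbsExp, div_mul_cancel₀ _ hZ]
  have hexpand : ∑ ω, (f ω - m) ^ 2 * Real.exp (-β * Ham Φ Λ ω) =
      ∑ ω, f ω ^ 2 * Real.exp (-β * Ham Φ Λ ω) - 2 * m * (m * Zfun Φ Λ β) +
        m ^ 2 * Zfun Φ Λ β := by
    rw [← hmZ, Zfun, mul_sum, mul_sum, ← sum_sub_distrib, ← sum_add_distrib]
    exact sum_congr rfl fun ω _ => by ring
  rw [hexpand, gibbsVar, gibbsExp]
  field_simp
  ring

lemma mul_gibbsProb_le_gibbsVar [Nonempty S] (f : Config S Λ → ℝ) (E : Set (Config S Λ))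
    {t : ℝ} (ht : ∀ ω ∈ E, t ≤ (f ω - gibbsExp Φ Λ β f) ^ 2) :
    t * gibbsProb Φ Λ β E ≤ gibbsVar Φ Λ β f := by
  rw [gibbsVar_eq_sum_sq_sub, gibbsProb, mul_div_assoc',
    div_le_div_iff_of_pos_right (Zfun_pos Φ Λ β), mul_sum]
  refine sum_le_sum fun ω _ => ?_
  by_cases hω : ω ∈ E
  · rw [Set.indicator_of_mem hω]
    exact mul_le_mul_of_nonneg_right (ht ω hω) (Real.exp_pos _).le
  · rw [Set.indicator_of_notMem hω, mul_zero]
    positivity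

lemma sum_gibbsVar_localTerm_le (hPC : PosCorr Φ) (hβ : 0 < β)
    {T : Finset (Finset (Zd d))} (hT : T ⊆ Λ.powerset) :
    ∑ B ∈ T, gibbsVar Φ Λ β (localTerm Φ Λ B) ≤ gibbsVar Φ Λ β (Ham Φ Λ) := by
  have hcov : ∀ B ∈ Λ.powerset, ∀ C ∈ Λ.powerset,
      0 ≤ gibbsCov Φ Λ β (localTerm Φ Λ B) (localTerm Φ Λ C) := fun B hB C hC => by
    rw [localTerm_of_subset (mem_powerset.mp hB), localTerm_of_subset (mem_powerset.mp hC)]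
    exact hPC Λ B C _ _ β hβ
  simp only [gibbsVar_eq_gibbsCov, Ham_eq_sum_localTerm, gibbsCov_sum_sum]
  calc ∑ B ∈ T, gibbsCov Φ Λ β (localTerm Φ Λ B) (localTerm Φ Λ B)
      ≤ ∑ B ∈ T, ∑ C ∈ Λ.powerset, gibbsCov Φ Λ β (localTerm Φ Λ B) (localTerm Φ Λ C) :=
        sum_le_sum fun B hB => single_le_sum (hcov B (hT hB)) (hT hB)
    _ ≤ _ := sum_le_sum_of_subset_of_nonneg hT fun B hB _ => sum_nonneg (hcov B hB)

lemma hasDerivAt_sum_mul_exp (f : Config S Λ → ℝ) (β : ℝ) :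
    HasDerivAt (fun t => ∑ ω, f ω * Real.exp (-t * Ham Φ Λ ω))
      (-∑ ω, f ω * Ham Φ Λ ω * Real.exp (-β * Ham Φ Λ ω)) β := by
  rw [← sum_neg_distrib]
  refine HasDerivAt.fun_sum fun ω _ => ?_
  exact ((((hasDerivAt_neg β).mul_const (Ham Φ Λ ω)).exp).const_mul (f ω)).congr_deriv (by ring)

lemma hasDerivAt_Zfun (β : ℝ) :
    HasDerivAt (fun t => Zfun Φ Λ t) (-∑ ω, Ham Φ Λ ω * Real.exp (-β * Ham Φ Λ ω)) β := by
  simpa [Zfun] using hasDerivAt_sum_mul_exp (Φ := Φ) (fun _ => 1) β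

lemma hasDerivAt_gibbsExp [Nonempty S] (f : Config S Λ → ℝ) (β : ℝ) :
    HasDerivAt (fun t => gibbsExp Φ Λ t f) (-gibbsCov Φ Λ β f (Ham Φ Λ)) β := by
  refine ((hasDerivAt_sum_mul_exp f β).div (hasDerivAt_Zfun β) (Zfun_pos Φ Λ β).ne').congr_deriv ?_
  have hZ := (Zfun_pos Φ Λ β).ne'
  simp only [gibbsCov, gibbsExp]
  -- keep `field_simp` from rewriting inside the exponentials
  generalize Zfun Φ Λ β = Z at hZ ⊢
  generalize ∑ ω, f ω * Ham Φ Λ ω * Real.exp (-β * Ham Φ Λ ω) = a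
  field_simp
  ring

lemma hasDerivAt_pressureFin [Nonempty S] (β : ℝ) :
    HasDerivAt (fun t => pressureFin Φ Λ t) (gibbsExp Φ Λ β (Ham Φ Λ) / Λ.card) β := by
  refine (((hasDerivAt_Zfun β).log (Zfun_pos Φ Λ β).ne').neg.div_const _).congr_deriv ?_
  rw [gibbsExp]
  ring

end Gibbs

section FiniteEnergy

variable {d : ℕ} {S : Type} [Fintype S] [Nonempty S] {Φ : Pot d S} {Λ A : Finset (Zd d)}
  {β : ℝ}

/-- Overwriting the spins in `A` by `τ` maps the fibre over `τ'` bijectively onto the fibre over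
`τ` and changes the energy by at most `2 |A| ‖Φ‖`. -/
lemma sum_exp_fiber_le [DecidableEq S] (hTI : TransInv Φ) (hAS : AbsSummable Φ) (hA : A ⊆ Λ)
    (hβ : 0 ≤ β) (τ τ' : Config S A) :
    ∑ ω with restrictCfg hA ω = τ', Real.exp (-β * Ham Φ Λ ω) ≤
      Real.exp (β * (2 * A.card * potFullNorm Φ)) *
        ∑ ω with restrictCfg hA ω = τ, Real.exp (-β * Ham Φ Λ ω) := by
  have hterm : ∀ ω : Config S Λ, Real.exp (-β * Ham Φ Λ ω) ≤
      Real.exp (β * (2 * A.card * potFullNorm Φ)) *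
        Real.exp (-β * Ham Φ Λ (replaceCfg τ ω)) := fun ω => by
    have hagree : ∀ i : {x // x ∈ Λ}, i.1 ∉ A → replaceCfg τ ω i = ω i :=
      fun i hi => dif_neg hi
    have := mul_le_mul_of_nonneg_left (abs_le.mp (abs_Ham_sub_le hTI hAS _ _ hagree)).2 hβ
    rw [← Real.exp_add, Real.exp_le_exp]
    linarith
  calc _ ≤ ∑ ω with restrictCfg hA ω = τ', Real.exp (β * (2 * A.card * potFullNorm Φ)) *
        Real.exp (-β * Ham Φ Λ (replaceCfg τ ω)) := sum_le_sum fun ω _ => hterm ω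
    _ = _ := by
      rw [← mul_sum]
      congr 1
      refine sum_nbij' (replaceCfg τ) (replaceCfg τ') ?_ ?_ ?_ ?_ fun _ _ => rfl
      · simp [restrictCfg_replaceCfg]
      · simp [restrictCfg_replaceCfg]
      · exact fun ω hω => replaceCfg_of_restrictCfg_eq hA τ (mem_filter.mp hω).2
      · exact fun ω hω => replaceCfg_of_restrictCfg_eq hA τ' (mem_filter.mp hω).2

lemma inv_le_gibbsProb_restrictCfg_eq (hTI : TransInv Φ) (hAS : AbsSummable Φ) (hA : A ⊆ Λ)
    (hβ : 0 ≤ β) (τ : Config S A) :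
    (Fintype.card (Config S A) * Real.exp (β * (2 * A.card * potFullNorm Φ)))⁻¹ ≤
      gibbsProb Φ Λ β {ω | restrictCfg hA ω = τ} := by
  classical
  have hZ : Zfun Φ Λ β ≤ Fintype.card (Config S A) *
      Real.exp (β * (2 * A.card * potFullNorm Φ)) *
        ∑ ω with restrictCfg hA ω = τ, Real.exp (-β * Ham Φ Λ ω) :=
    calc Zfun Φ Λ β = ∑ τ', ∑ ω with restrictCfg hA ω = τ', Real.exp (-β * Ham Φ Λ ω) :=
          (sum_fiberwise _ _ _).symm
      _ ≤ ∑ _τ' : Config S A, Real.exp (β * (2 * A.card * potFullNorm Φ)) *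
            ∑ ω with restrictCfg hA ω = τ, Real.exp (-β * Ham Φ Λ ω) :=
          sum_le_sum fun τ' _ => sum_exp_fiber_le hTI hAS hA hβ τ τ'
      _ = _ := by rw [sum_const, card_univ, nsmul_eq_mul]; ring
  rw [gibbsProb, sum_indicator_eq_sum_filter, inv_le_iff_one_le_mul₀' (by positivity),
    ← mul_div_assoc, one_le_div (Zfun_pos Φ Λ β)]
  simpa using hZ

lemma gibbsVar_restrictCfg_ge (hTI : TransInv Φ) (hAS : AbsSummable Φ) (hA : A ⊆ Λ)
    (hβ : 0 ≤ β) (F : Config S A → ℝ) (τ₁ τ₂ : Config S A) :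
    (F τ₁ - F τ₂) ^ 2 / 4 *
        (Fintype.card (Config S A) * Real.exp (β * (2 * A.card * potFullNorm Φ)))⁻¹ ≤
      gibbsVar Φ Λ β (fun ω => F (restrictCfg hA ω)) := by
  set m := gibbsExp Φ Λ β (fun ω => F (restrictCfg hA ω))
  -- one of the two values is at distance at least |F τ₁ - F τ₂| / 2 from the mean
  obtain ⟨τ, hτ⟩ : ∃ τ, (F τ₁ - F τ₂) ^ 2 / 4 ≤ (F τ - m) ^ 2 := by
    rcases le_total ((F τ₁ - m) ^ 2) ((F τ₂ - m) ^ 2) with h | h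
    · exact ⟨τ₂, by nlinarith [sq_nonneg (F τ₁ - m + (F τ₂ - m))]⟩
    · exact ⟨τ₁, by nlinarith [sq_nonneg (F τ₁ - m + (F τ₂ - m))]⟩
  calc _ ≤ (F τ₁ - F τ₂) ^ 2 / 4 * gibbsProb Φ Λ β {ω | restrictCfg hA ω = τ} := by
        gcongr
        exact inv_le_gibbsProb_restrictCfg_eq hTI hAS hA hβ τ
    _ ≤ _ := mul_gibbsProb_le_gibbsVar _ _ fun ω hω => by
        rw [(hω : restrictCfg hA ω = τ)]
        exact hτ

end FiniteEnergy

section Cube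

variable {d : ℕ}

lemma mem_cube {z : Zd d} {n : ℕ} : z ∈ cube d n ↔ ∀ i, -(n : ℤ) ≤ z i ∧ z i ≤ n := by
  simp [cube, Fintype.mem_piFinset]

lemma card_cube (n : ℕ) : (cube d n).card = (2 * n + 1) ^ d := by
  have : (Icc (-(n : ℤ)) n).card = 2 * n + 1 := by rw [Int.card_Icc]; omega
  simp [cube, Fintype.card_piFinset, this]

lemma card_cube_le (m : ℕ) {n : ℕ} (h : 2 * m ≤ n) :
    ((cube d n).card : ℝ) ≤ 3 ^ d * (cube d (n - m)).card := by
  rw [card_cube, card_cube]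
  exact_mod_cast (Nat.pow_le_pow_left (by omega : 2 * n + 1 ≤ 3 * (2 * (n - m) + 1)) d).trans_eq
    (mul_pow _ _ _)

lemma exists_subset_cube (A : Finset (Zd d)) : ∃ m : ℕ, A ⊆ cube d m := by
  refine ⟨A.sup fun a => univ.sup fun i => (a i).natAbs, fun a ha => mem_cube.mpr fun i => ?_⟩
  have h₁ := le_sup (f := fun a : Zd d => univ.sup fun j => (a j).natAbs) ha
  have h₂ := le_sup (f := fun j => (a j).natAbs) (mem_univ i)
  omega

lemma shiftSet_subset_cube {A : Finset (Zd d)} {m k : ℕ} (hA : A ⊆ cube d m) {x : Zd d}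
    (hx : x ∈ cube d k) : shiftSet x A ⊆ cube d (m + k) := by
  intro z hz
  obtain ⟨a, ha, rfl⟩ := Finset.mem_image.mp hz
  have h1 := mem_cube.mp (hA ha)
  have h2 := mem_cube.mp hx
  refine mem_cube.mpr fun i => ?_
  have := h1 i
  have := h2 i
  simp only [Pi.add_apply]
  omega

lemma shiftSet_injective {A : Finset (Zd d)} (hA : A.Nonempty) :
    Function.Injective fun x : Zd d => shiftSet x A := by
  -- the sum of the elements of `A + x` is `∑ A + #A • x`
  have hsum : ∀ x : Zd d, ∑ z ∈ shiftSet x A, z = ∑ a ∈ A, a + A.card • x := fun x => by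
    rw [shiftSet, sum_image fun _ _ _ _ => add_right_cancel, sum_add_distrib, sum_const]
  intro x y h
  have := hsum x
  rw [show shiftSet x A = shiftSet y A from h, hsum y, add_right_inj] at this
  exact nsmul_right_injective (card_ne_zero.mpr hA) this.symm

end Cube

section Pressure

variable {d : ℕ} {S : Type} [Fintype S] [Nonempty S] {Φ : Pot d S}

lemma gibbsVar_localTerm_shiftSet_ge (hTI : TransInv Φ) (hAS : AbsSummable Φ)
    {Λ A : Finset (Zd d)} {x : Zd d} (hB : shiftSet x A ⊆ Λ) {β y : ℝ} (hβ : 0 ≤ β)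
    (hβy : β ≤ y) (ω₁ ω₂ : Config S A) :
    (Φ A ω₁ - Φ A ω₂) ^ 2 / 4 *
        (Fintype.card S ^ A.card * Real.exp (y * (2 * A.card * potFullNorm Φ)))⁻¹ ≤
      gibbsVar Φ Λ β (localTerm Φ Λ (shiftSet x A)) := by
  have hcard : (shiftSet x A).card = A.card := card_image_of_injective A (add_left_injective x)
  have hconf : Fintype.card (Config S (shiftSet x A)) = Fintype.card S ^ A.card := by
    rw [Fintype.card_fun, Fintype.card_coe, hcard]
  rw [localTerm_of_subset hB]
  refine le_trans ?_
    (gibbsVar_restrictCfg_ge hTI hAS hB hβ _ (shiftEquiv x A ω₁) (shiftEquiv x A ω₂))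
  rw [hTI.apply_shiftEquiv, hTI.apply_shiftEquiv, hconf, hcard, Nat.cast_pow]
  have := potFullNorm_nonneg Φ
  gcongr

lemma exists_mul_card_le_gibbsVar_Ham (hTI : TransInv Φ) (hAS : AbsSummable Φ)
    (hPC : PosCorr Φ) (hnc : ∃ (A : Finset (Zd d)) (ω₁ ω₂ : Config S A), Φ A ω₁ ≠ Φ A ω₂)
    (y : ℝ) : ∃ c > 0, ∃ N : ℕ, ∀ n ≥ N, ∀ β ∈ Set.Ioo 0 y,
      c * (cube d n).card ≤ gibbsVar Φ (cube d n) β (Ham Φ (cube d n)) := by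
  obtain ⟨A, ω₁, ω₂, hω⟩ := hnc
  have hA : A.Nonempty := nonempty_iff_ne_empty.mpr fun h => by
    subst h
    exact hω (congrArg _ (funext fun i => absurd i.2 (notMem_empty _)))
  obtain ⟨m, hm⟩ := exists_subset_cube A
  set δ := (Φ A ω₁ - Φ A ω₂) ^ 2 / 4 *
    (Fintype.card S ^ A.card * Real.exp (y * (2 * A.card * potFullNorm Φ)))⁻¹
  have hδ : 0 < δ := by
    have := sub_ne_zero.mpr hω
    positivity
  refine ⟨δ / 3 ^ d, by positivity, 2 * m, fun n hn β hβ => ?_⟩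
  set T := (cube d (n - m)).image fun x => shiftSet x A
  have hT : T ⊆ (cube d n).powerset := fun B hB => by
    obtain ⟨x, hx, rfl⟩ := mem_image.mp hB
    simpa [show m + (n - m) = n by omega] using shiftSet_subset_cube hm hx
  calc δ / 3 ^ d * (cube d n).card ≤ (cube d (n - m)).card * δ := by
        rw [div_mul_eq_mul_div, div_le_iff₀ (by positivity)]
        nlinarith [card_cube_le (d := d) m hn]
    _ = ∑ _B ∈ T, δ := by
        rw [sum_const, card_image_of_injective _ (shiftSet_injective hA), nsmul_eq_mul]
    _ ≤ ∑ B ∈ T, gibbsVar Φ (cube d n) β (localTerm Φ (cube d n) B) := sum_le_sum fun B hB => by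
        obtain ⟨x, hx, rfl⟩ := mem_image.mp hB
        exact gibbsVar_localTerm_shiftSet_ge hTI hAS (mem_powerset.mp (hT hB)) hβ.1.le hβ.2.le
          ω₁ ω₂
    _ ≤ _ := sum_gibbsVar_localTerm_le hPC hβ.1 hT

lemma concaveOn_pressureFin_add_half_mul_sq {Λ : Finset (Zd d)} (hΛ : Λ.Nonempty)
    {c y : ℝ} (hc : ∀ β ∈ Set.Ioo 0 y, c * Λ.card ≤ gibbsVar Φ Λ β (Ham Φ Λ)) :
    ConcaveOn ℝ (Set.Ioo 0 y) fun t => pressureFin Φ Λ t + c / 2 * t ^ 2 := by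
  have hΛ' : (0 : ℝ) < Λ.card := by exact_mod_cast hΛ.card_pos
  refine concaveOn_of_hasDerivWithinAt2_nonpos (convex_Ioo 0 y)
    (f' := fun t => gibbsExp Φ Λ t (Ham Φ Λ) / Λ.card + c * t)
    (f'' := fun t => -gibbsVar Φ Λ t (Ham Φ Λ) / Λ.card + c) ?_ ?_ ?_ ?_
  · exact fun t _ => ((hasDerivAt_pressureFin t).add (hasDerivAt_half_mul_sq c t))
      |>.continuousAt.continuousWithinAt
  · exact fun t _ => ((hasDerivAt_pressureFin t).add (hasDerivAt_half_mul_sq c t)).hasDerivWithinAt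
  · intro t _
    refine ((((hasDerivAt_gibbsExp _ t).div_const _).add
      ((hasDerivAt_id t).const_mul c)).congr_deriv ?_).hasDerivWithinAt
    rw [gibbsVar_eq_gibbsCov, mul_one]
  · intro t ht
    rw [interior_Ioo] at ht
    rw [neg_div, neg_add_le_iff_le_add, add_zero, le_div_iff₀ hΛ']
    exact hc t ht

variable {ψ : ℝ → ℝ}

lemma exists_concaveOn_pressure_add_half_mul_sq (hTI : TransInv Φ) (hAS : AbsSummable Φ)
    (hPC : PosCorr Φ) (hnc : ∃ (A : Finset (Zd d)) (ω₁ ω₂ : Config S A), Φ A ω₁ ≠ Φ A ω₂)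
    (hψ : ∀ β : ℝ, Tendsto (pressureSeq Φ β) atTop (𝓝 (ψ β))) (y : ℝ) :
    ∃ c > 0, ConcaveOn ℝ (Set.Ioo 0 y) fun t => ψ t + c / 2 * t ^ 2 := by
  obtain ⟨c, hc, N, hN⟩ := exists_mul_card_le_gibbsVar_Ham hTI hAS hPC hnc y
  refine ⟨c, hc, ConcaveOn.of_tendsto (F := fun n t => pressureSeq Φ t n + c / 2 * t ^ 2) ?_
    fun t _ => (hψ t).add_const _⟩
  filter_upwards [eventually_ge_atTop N] with n hn
  exact concaveOn_pressureFin_add_half_mul_sq ⟨0, mem_cube.mpr fun _ => by simp⟩ (hN n hn)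

lemma exists_antitoneOn_deriv_pressure_add_mul (hTI : TransInv Φ) (hAS : AbsSummable Φ)
    (hPC : PosCorr Φ) (hnc : ∃ (A : Finset (Zd d)) (ω₁ ω₂ : Config S A), Φ A ω₁ ≠ Φ A ω₂)
    (hψ : ∀ β : ℝ, Tendsto (pressureSeq Φ β) atTop (𝓝 (ψ β)))
    (hdiff : ∀ β : ℝ, 0 < β → DifferentiableAt ℝ ψ β) (y : ℝ) :
    ∃ c > 0, AntitoneOn (fun t => deriv ψ t + c * t) (Set.Ioo 0 y) := by
  obtain ⟨c, hc, hconc⟩ := exists_concaveOn_pressure_add_half_mul_sq hTI hAS hPC hnc hψ y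
  have hderiv : ∀ t ∈ Set.Ioo 0 y, deriv (fun t => ψ t + c / 2 * t ^ 2) t = deriv ψ t + c * t :=
    fun t ht => ((hdiff t ht.1).hasDerivAt.add (hasDerivAt_half_mul_sq c t)).deriv
  have hanti := hconc.antitoneOn_deriv fun t ht =>
    ((hdiff t ht.1).hasDerivAt.add (hasDerivAt_half_mul_sq c t)).differentiableAt
  exact ⟨c, hc, fun a ha b hb hab => by simpa only [hderiv a ha, hderiv b hb] using hanti ha hb hab⟩

end Pressure

theorem thm44_iii_general {d : ℕ} {S : Type} [Fintype S] [Nonempty S]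
    (Φ : Pot d S) (hTI : TransInv Φ) (hAS : AbsSummable Φ)
    (hPC : PosCorr Φ)
    (hnc : ∃ (A₀ : Finset (Zd d)) (ω₁ ω₂ : Config S A₀), Φ A₀ ω₁ ≠ Φ A₀ ω₂)
    (ψ : ℝ → ℝ) (hψ : ∀ β : ℝ, Filter.Tendsto (pressureSeq Φ β) Filter.atTop (𝓝 (ψ β)))
    (hdiff : ∀ β : ℝ, 0 < β → DifferentiableAt ℝ ψ β)
    (a b : ℝ) (σR : ℝ → ℝ)
    (hmaps1 : Set.MapsTo (deriv ψ) (Set.Ioi 0) (Set.Ioo a b))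
    (hmaps2 : Set.MapsTo (deriv σR) (Set.Ioo a b) (Set.Ioi 0))
    (hinv1 : ∀ β ∈ Set.Ioi (0 : ℝ), deriv σR (deriv ψ β) = β)
    (hinv2 : ∀ u ∈ Set.Ioo a b, deriv ψ (deriv σR u) = u) :
    ∀ β : ℝ, 0 < β →
      ((¬ DifferentiableAt ℝ (deriv ψ) β) ↔
        (¬ DifferentiableAt ℝ (deriv σR) (deriv ψ β) ∨
          deriv (deriv σR) (deriv ψ β) = 0)) ∧
      (DifferentiableAt ℝ (deriv ψ) β → DifferentiableAt ℝ (deriv σR) (deriv ψ β) →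
        deriv (deriv ψ) β * deriv (deriv σR) (deriv ψ β) = 1) := by
  intro β hβ
  have hstrong := exists_antitoneOn_deriv_pressure_add_mul hTI hAS hPC hnc hψ hdiff
  exact (strictAntiOn_Ioi_of_forall_antitoneOn_add_mul hstrong).not_differentiableAt_iff_of_invOn
    isOpen_Ioi isOpen_Ioo hmaps1 hmaps2 ⟨hinv1, hinv2⟩ hβ
    fun hd => (deriv_neg_of_forall_antitoneOn_add_mul hstrong hβ hd).ne

/-- **Theorem 4.4, part (iii)**: with `a < b` as in parts (i)-(ii) (so that `σ = s` on
`(a,b)` and `σ'`, `ψ'` are mutually inverse), for every `β > 0` with `u := ψ'(β)`: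
there is a second-order phase transition at `β` (ψ differentiable, not twice
differentiable at β) iff `σ` is not twice differentiable at `u` or `σ''(u) = 0`;
moreover if both are twice differentiable then `ψ''(β)σ''(u) = 1`. -/
theorem thm44_iii {d : ℕ} (hd : 0 < d) {S : Type} [Fintype S] [Nonempty S]
    (Φ : Pot d S) (hTI : TransInv Φ) (hAS : AbsSummable Φ)
    (hΦ0 : ∀ ω : Config S (∅ : Finset (Zd d)), Φ ∅ ω = 0)
    (hPC : PosCorr Φ)
    (hnc : ∃ (A₀ : Finset (Zd d)) (ω₁ ω₂ : Config S A₀), Φ A₀ ω₁ ≠ Φ A₀ ω₂)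
    (ψ : ℝ → ℝ) (hψ : ∀ β : ℝ, Filter.Tendsto (pressureSeq Φ β) Filter.atTop (𝓝 (ψ β)))
    (hdiff : ∀ β : ℝ, 0 < β → DifferentiableAt ℝ ψ β)
    (a b : ℝ) (hab : a < b) (σR : ℝ → ℝ)
    (hσ : ∀ u ∈ Set.Ioo a b,
      Filter.Tendsto (sigmaSeq Φ u) Filter.atTop (𝓝 ((σR u : ℝ) : EReal)))
    (hσdiff : ∀ u ∈ Set.Ioo a b, DifferentiableAt ℝ σR u)
    (hmaps1 : Set.MapsTo (deriv ψ) (Set.Ioi 0) (Set.Ioo a b))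
    (hmaps2 : Set.MapsTo (deriv σR) (Set.Ioo a b) (Set.Ioi 0))
    (hinv1 : ∀ β ∈ Set.Ioi (0 : ℝ), deriv σR (deriv ψ β) = β)
    (hinv2 : ∀ u ∈ Set.Ioo a b, deriv ψ (deriv σR u) = u) :
    ∀ β : ℝ, 0 < β →
      ((¬ DifferentiableAt ℝ (deriv ψ) β) ↔
        (¬ DifferentiableAt ℝ (deriv σR) (deriv ψ β) ∨
          deriv (deriv σR) (deriv ψ β) = 0)) ∧
      (DifferentiableAt ℝ (deriv ψ) β → DifferentiableAt ℝ (deriv σR) (deriv ψ β) →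
        deriv (deriv ψ) β * deriv (deriv σR) (deriv ψ β) = 1) :=
  thm44_iii_general Φ hTI hAS hPC hnc ψ hψ hdiff a b σR hmaps1 hmaps2 hinv1 hinv2
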